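/- q-Gauss summation: for complex q with 0<|q|<1 and generic a, b, c with |c/(ab)| < 1, ∑_{k≥0} (a;q)_k (b;q)_k / ((c;q)_k (q;q)_k) (c/(ab))^k = (c/a;q)_∞ (c/b;q)_∞ / ((c;q)_∞ (c/(ab);q)_∞). -/

import Mathlib

noncomputable def qp (q x : ℂ) (k : ℕ) : ℂ := ∏ j ∈ Finset.range k, (1 - x * q ^ j)

noncomputable def qpi (q x : ℂ) : ℂ := ∏' j : ℕ, (1 - x * q ^ j)

/-!
Write `S(c)` for the sum and `t_k(c)` for its terms. Termwise,
`(1 - c)(1 - c/ab) t_k(c) - (1 - c/a)(1 - c/b) t_k(cq)` equals `(1 - c)(g_k - g_{k+1})` with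
`g_k = (1 - q^k) t_k(c)`; since `g_0 = 0` the series telescopes to zero, which is the contiguous
relation `(1 - c)(1 - c/ab) S(c) = (1 - c/a)(1 - c/b) S(cq)`. Iterating it gives
`(c;q)_N (c/ab;q)_N S(c) = (c/a;q)_N (c/b;q)_N S(cq^N)`, and `S(cq^N) → 1` by dominated
convergence: all finite products `(x;q)_k` are bounded, and `(cq^n;q)_k = (c;q)_{n+k} / (c;q)_n`
stays away from zero uniformly in `n` and `k`.
-/

open Filter Topology

lemma qp_succ (q x : ℂ) (k : ℕ) : qp q x (k + 1) = qp q x k * (1 - x * q ^ k) :=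
  Finset.prod_range_succ _ _

lemma qp_add (q x : ℂ) (m n : ℕ) : qp q x (m + n) = qp q x m * qp q (x * q ^ m) n := by
  induction n with
  | zero => simp [qp]
  | succ n ih => rw [← add_assoc, qp_succ, ih, qp_succ, mul_assoc, mul_assoc, pow_add]

lemma qp_succ' (q x : ℂ) (k : ℕ) : qp q x (k + 1) = (1 - x) * qp q (x * q) k := by
  rw [add_comm, qp_add, pow_one]
  simp [qp]

lemma qp_ne_zero_mul_pow {q x : ℂ} (hx : ∀ k, qp q x k ≠ 0) (n k : ℕ) :
    qp q (x * q ^ n) k ≠ 0 :=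
  right_ne_zero_of_mul (qp_add q x n k ▸ hx (n + k))

lemma hasProd_qpi {q : ℂ} (hq : ‖q‖ < 1) (x : ℂ) :
    HasProd (fun j ↦ 1 - x * q ^ j) (qpi q x) := by
  have h := Complex.multipliable_one_add_of_summable
    ((summable_geometric_of_norm_lt_one hq).mul_left (-x))
  simp only [neg_mul, ← sub_eq_add_neg] at h
  exact h.hasProd

lemma tendsto_qp_qpi {q : ℂ} (hq : ‖q‖ < 1) (x : ℂ) :
    Tendsto (qp q x) atTop (𝓝 (qpi q x)) :=
  (hasProd_qpi hq x).tendsto_prod_nat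

lemma qpi_ne_zero {q x : ℂ} (hq : ‖q‖ < 1) (hx : ∀ k, qp q x k ≠ 0) : qpi q x ≠ 0 := by
  have hfactor (j : ℕ) : 1 - x * q ^ j ≠ 0 := right_ne_zero_of_mul (qp_succ q x j ▸ hx (j + 1))
  have hlog := Complex.summable_log_one_add_of_summable
    ((summable_geometric_of_norm_lt_one hq).mul_left (-x))
  simp only [neg_mul, ← sub_eq_add_neg] at hlog
  rw [qpi, ← Complex.cexp_tsum_eq_tprod hfactor hlog]
  exact Complex.exp_ne_zero _

lemma exists_norm_qp_le {q : ℂ} (hq : ‖q‖ < 1) (x : ℂ) : ∃ M, ∀ k, ‖qp q x k‖ ≤ M := by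
  obtain ⟨M, hM⟩ := (tendsto_qp_qpi hq x).norm.bddAbove_range
  exact ⟨M, fun k ↦ hM ⟨k, rfl⟩⟩

lemma exists_pos_le_norm_qp {q x : ℂ} (hq : ‖q‖ < 1) (hx : ∀ k, qp q x k ≠ 0) :
    ∃ δ > 0, ∀ k, δ ≤ ‖qp q x k‖ := by
  have hlim := (tendsto_qp_qpi hq x).norm.inv₀ (norm_ne_zero_iff.2 (qpi_ne_zero hq hx))
  obtain ⟨M, hM⟩ := hlim.bddAbove_range
  have hM' (k : ℕ) : ‖qp q x k‖⁻¹ ≤ M := hM ⟨k, rfl⟩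
  have hMpos : 0 < M := (inv_pos.2 (norm_pos_iff.2 (hx 0))).trans_le (hM' 0)
  exact ⟨M⁻¹, inv_pos.2 hMpos, fun k ↦ inv_le_of_inv_le₀ (norm_pos_iff.2 (hx k)) (hM' k)⟩

lemma exists_pos_le_norm_qp_mul_pow {q x : ℂ} (hq : ‖q‖ < 1) (hx : ∀ k, qp q x k ≠ 0) :
    ∃ δ > 0, ∀ n k, δ ≤ ‖qp q (x * q ^ n) k‖ := by
  obtain ⟨δ, hδ, hδle⟩ := exists_pos_le_norm_qp hq hx
  obtain ⟨M, hM⟩ := exists_norm_qp_le hq x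
  have hMpos : 0 < M := hδ.trans_le ((hδle 0).trans (hM 0))
  refine ⟨δ / M, div_pos hδ hMpos, fun n k ↦ ?_⟩
  rw [div_le_iff₀ hMpos]
  calc δ ≤ ‖qp q x (n + k)‖ := hδle _
    _ = ‖qp q x n‖ * ‖qp q (x * q ^ n) k‖ := by rw [qp_add, norm_mul]
    _ ≤ M * ‖qp q (x * q ^ n) k‖ := by gcongr; exact hM n
    _ = _ := mul_comm _ _

noncomputable def gaussTerm (q a b c : ℂ) (k : ℕ) : ℂ :=
  qp q a k * qp q b k / (qp q c k * qp q q k) * (c / (a * b)) ^ k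

lemma exists_norm_gaussTerm_mul_pow_le {q c : ℂ} (a b : ℂ) (hq : ‖q‖ < 1)
    (hc : ∀ k, qp q c k ≠ 0) (hqq : ∀ k, qp q q k ≠ 0) :
    ∃ K ≥ 0, ∀ n k, ‖gaussTerm q a b (c * q ^ n) k‖ ≤ K * (‖c / (a * b)‖ * ‖q‖ ^ n) ^ k := by
  obtain ⟨Ma, hMa⟩ := exists_norm_qp_le hq a
  obtain ⟨Mb, hMb⟩ := exists_norm_qp_le hq b
  obtain ⟨δc, hδc, hδcle⟩ := exists_pos_le_norm_qp_mul_pow hq hc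
  obtain ⟨δq, hδq, hδqle⟩ := exists_pos_le_norm_qp hq hqq
  have hMa0 : 0 ≤ Ma := (norm_nonneg _).trans (hMa 0)
  have hMb0 : 0 ≤ Mb := (norm_nonneg _).trans (hMb 0)
  refine ⟨Ma * Mb / (δc * δq), by positivity, fun n k ↦ ?_⟩
  have hratio : c * q ^ n / (a * b) = c / (a * b) * q ^ n := by ring
  rw [gaussTerm, hratio, norm_mul, norm_pow, norm_mul, norm_pow, norm_div, norm_mul, norm_mul]
  gcongr
  exacts [hMa k, hMb k, hδcle n k, hδqle k]

lemma summable_gaussTerm_mul_pow {q a b c : ℂ} (hq : ‖q‖ < 1) (hc : ∀ k, qp q c k ≠ 0)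
    (hqq : ∀ k, qp q q k ≠ 0) (hr : ‖c / (a * b)‖ < 1) (n : ℕ) :
    Summable (gaussTerm q a b (c * q ^ n)) := by
  obtain ⟨K, -, hK⟩ := exists_norm_gaussTerm_mul_pow_le a b hq hc hqq
  have hratio : ‖c / (a * b)‖ * ‖q‖ ^ n < 1 :=
    (mul_le_of_le_one_right (norm_nonneg _) (pow_le_one₀ (norm_nonneg _) hq.le)).trans_lt hr
  exact .of_norm_bounded ((summable_geometric_of_lt_one (by positivity) hratio).mul_left K)
    (hK n)

lemma tendsto_tsum_gaussTerm_mul_pow {q a b c : ℂ} (hq : ‖q‖ < 1) (hc : ∀ k, qp q c k ≠ 0)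
    (hqq : ∀ k, qp q q k ≠ 0) (hr : ‖c / (a * b)‖ < 1) :
    Tendsto (fun n ↦ ∑' k, gaussTerm q a b (c * q ^ n) k) atTop (𝓝 1) := by
  obtain ⟨K, hK0, hK⟩ := exists_norm_gaussTerm_mul_pow_le a b hq hc hqq
  set r := ‖c / (a * b)‖
  have hlim (k : ℕ) : Tendsto (fun n ↦ gaussTerm q a b (c * q ^ n) k) atTop
      (𝓝 (if k = 0 then 1 else 0)) := by
    split_ifs with hk
    · simp [hk, gaussTerm, qp]
    · have hratio : Tendsto (fun n : ℕ ↦ r * ‖q‖ ^ n) atTop (𝓝 0) := by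
        simpa using (tendsto_pow_atTop_nhds_zero_of_lt_one (norm_nonneg _) hq).const_mul r
      refine squeeze_zero_norm (hK · k) ?_
      simpa [zero_pow hk] using (hratio.pow k).const_mul K
  have hdom : ∀ n k, ‖gaussTerm q a b (c * q ^ n) k‖ ≤ K * r ^ k := fun n k ↦
    (hK n k).trans (by
      gcongr
      exact mul_le_of_le_one_right (norm_nonneg _) (pow_le_one₀ (norm_nonneg _) hq.le))
  simpa using tendsto_tsum_of_dominated_convergence
    ((summable_geometric_of_lt_one (norm_nonneg _) hr).mul_left K) hlim (.of_forall hdom)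

lemma gaussTerm_contiguous {q a b c : ℂ} (ha : a ≠ 0) (hb : b ≠ 0) {k : ℕ}
    (hc : qp q c (k + 1) ≠ 0) (hqq : qp q q (k + 1) ≠ 0) :
    (1 - c) * (1 - c / (a * b)) * gaussTerm q a b c k
        - (1 - c / a) * (1 - c / b) * gaussTerm q a b (c * q) k
      = (1 - c) * ((1 - q ^ k) * gaussTerm q a b c k
          - (1 - q ^ (k + 1)) * gaussTerm q a b c (k + 1)) := by
  have hc1 : 1 - c ≠ 0 := left_ne_zero_of_mul (qp_succ' q c k ▸ hc)
  have hcq : qp q (c * q) k = qp q c k * (1 - c * q ^ k) / (1 - c) := by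
    rw [eq_div_iff hc1, mul_comm, ← qp_succ', qp_succ]
  rw [qp_succ] at hc hqq
  obtain ⟨hck, hck'⟩ := mul_ne_zero_iff.1 hc
  obtain ⟨hqk, hqk'⟩ := mul_ne_zero_iff.1 hqq
  simp only [gaussTerm, hcq, qp_succ, pow_succ', mul_div_right_comm c q, mul_pow]
  rw [mul_comm] at hqk'
  field_simp
  ring

lemma tsum_gaussTerm_contiguous {q a b c : ℂ} (hq : ‖q‖ < 1) (ha : a ≠ 0) (hb : b ≠ 0)
    (hc : ∀ k, qp q c k ≠ 0) (hqq : ∀ k, qp q q k ≠ 0) (hs : Summable (gaussTerm q a b c))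
    (hs' : Summable (gaussTerm q a b (c * q))) :
    (1 - c) * (1 - c / (a * b)) * ∑' k, gaussTerm q a b c k
      = (1 - c / a) * (1 - c / b) * ∑' k, gaussTerm q a b (c * q) k := by
  set g : ℕ → ℂ := fun k ↦ (1 - q ^ k) * gaussTerm q a b c k
  have hg : Summable g := by
    refine .of_norm_bounded (hs.norm.mul_left 2) fun k ↦ ?_
    rw [norm_mul]
    gcongr
    calc ‖1 - q ^ k‖ ≤ ‖(1 : ℂ)‖ + ‖q ^ k‖ := norm_sub_le _ _
      _ ≤ 2 := by rw [norm_one, norm_pow]; linarith [pow_le_one₀ (norm_nonneg q) hq.le (n := k)]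
  have htelescope : ∑' k, (g k - g (k + 1)) = 0 := by
    rw [hg.tsum_sub ((summable_nat_add_iff 1).2 hg), hg.tsum_eq_zero_add]
    simp [g]
  rw [← sub_eq_zero, ← tsum_mul_left, ← tsum_mul_left,
    ← (hs.mul_left _).tsum_sub (hs'.mul_left _)]
  simp only [gaussTerm_contiguous ha hb (hc _) (hqq _), tsum_mul_left]
  exact mul_eq_zero_of_right _ htelescope

lemma qp_mul_qp_mul_tsum_gaussTerm {q a b c : ℂ} (hq : ‖q‖ < 1) (ha : a ≠ 0) (hb : b ≠ 0)
    (hc : ∀ k, qp q c k ≠ 0) (hqq : ∀ k, qp q q k ≠ 0)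
    (hs : ∀ n, Summable (gaussTerm q a b (c * q ^ n))) (N : ℕ) :
    qp q c N * qp q (c / (a * b)) N * ∑' k, gaussTerm q a b c k
      = qp q (c / a) N * qp q (c / b) N * ∑' k, gaussTerm q a b (c * q ^ N) k := by
  induction N with
  | zero => simp [qp]
  | succ N ih =>
    have hshift : c * q ^ (N + 1) = c * q ^ N * q := by ring
    have hcontig := tsum_gaussTerm_contiguous hq ha hb (qp_ne_zero_mul_pow hc N) hqq (hs N)
      (hshift ▸ hs (N + 1))
    simp only [qp_succ, hshift]
    linear_combination (1 - c * q ^ N) * (1 - c / (a * b) * q ^ N) * ih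
      + qp q (c / a) N * qp q (c / b) N * hcontig

theorem qGauss_general (q a b c : ℂ)
    (hq1 : ‖q‖ < 1)
    (ha : a ≠ 0) (hb : b ≠ 0)
    (harg : ‖c / (a * b)‖ < 1)
    (hden : ∀ k : ℕ, qp q c k ≠ 0 ∧ qp q q k ≠ 0)
    (hdeninf : qpi q c ≠ 0 ∧ qpi q (c / (a * b)) ≠ 0) :
    ∑' k : ℕ, qp q a k * qp q b k / (qp q c k * qp q q k) * (c / (a * b)) ^ k
      = qpi q (c / a) * qpi q (c / b) / (qpi q c * qpi q (c / (a * b))) := by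
  change ∑' k, gaussTerm q a b c k = _
  have hc (k : ℕ) := (hden k).1
  have hqq (k : ℕ) := (hden k).2
  have hlhs := ((tendsto_qp_qpi hq1 c).mul (tendsto_qp_qpi hq1 (c / (a * b)))).mul_const
    (∑' k, gaussTerm q a b c k)
  have hrhs := ((tendsto_qp_qpi hq1 (c / a)).mul (tendsto_qp_qpi hq1 (c / b))).mul
    (tendsto_tsum_gaussTerm_mul_pow hq1 hc hqq harg)
  rw [← funext (qp_mul_qp_mul_tsum_gaussTerm hq1 ha hb hc hqq
    (summable_gaussTerm_mul_pow hq1 hc hqq harg)), mul_one] at hrhs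
  rw [eq_div_iff (mul_ne_zero hdeninf.1 hdeninf.2), mul_comm]
  exact tendsto_nhds_unique hlhs hrhs

/-- q-Gauss summation. -/
theorem qGauss (q a b c : ℂ)
    (hq0 : 0 < ‖q‖) (hq1 : ‖q‖ < 1)
    (ha : a ≠ 0) (hb : b ≠ 0)
    (harg : ‖c / (a * b)‖ < 1)
    (hden : ∀ k : ℕ, qp q c k ≠ 0 ∧ qp q q k ≠ 0)
    (hdeninf : qpi q c ≠ 0 ∧ qpi q (c / (a * b)) ≠ 0) :
    ∑' k : ℕ, qp q a k * qp q b k / (qp q c k * qp q q k) * (c / (a * b)) ^ k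
      = qpi q (c / a) * qpi q (c / b) / (qpi q c * qpi q (c / (a * b))) :=
  qGauss_general q a b c hq1 ha hb harg hden hdeninf
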